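/- Although the Gödel metric satisfies R·R = Q(S,R), at every point of ℝ⁴ there is NO nonzero covector θ such that θ_m R_{hijk} + θ_j R_{hikm} + θ_k R_{himj} = 0 for all indices h, i, j, k, m (i.e. the sufficient condition of Deszcz–Grycak for R·R = Q(S,R) fails for the Gödel metric). -/

import Mathlib

noncomputable section

open scoped BigOperators

/-- A point of `ℝⁿ`. -/
abbrev Pt (n : ℕ) := Fin n → ℝ
/-- A (0,2)-tensor field on `ℝⁿ`, given by its components. -/
abbrev Ten2 (n : ℕ) := Pt n → Fin n → Fin n → ℝ
/-- A (0,4)-tensor field on `ℝⁿ`, given by its components. -/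
abbrev Ten4 (n : ℕ) := Pt n → Fin n → Fin n → Fin n → Fin n → ℝ

variable {n : ℕ}

/-- Partial derivative `∂ᵢ f` at `x`. -/
def pderiv (i : Fin n) (f : Pt n → ℝ) (x : Pt n) : ℝ :=
  fderiv ℝ f x (Pi.single i 1)

/-- Components `g^{ij}` of the inverse of the metric. -/
def ginv (g : Ten2 n) (x : Pt n) (i j : Fin n) : ℝ :=
  (Matrix.of (g x))⁻¹ i j

/-- Christoffel symbols of the second kind, `Γ^h_{ij}` as a function of the point. -/
def christoffel (g : Ten2 n) (h i j : Fin n) (x : Pt n) : ℝ :=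
  (1/2) * ∑ l, ginv g x h l *
    (pderiv i (fun y => g y l j) x + pderiv j (fun y => g y i l) x - pderiv l (fun y => g y i j) x)

/-- Curvature components `R^h_{ijk}`. -/
def curvUp (g : Ten2 n) (h i j k : Fin n) (x : Pt n) : ℝ :=
  pderiv j (christoffel g h i k) x - pderiv k (christoffel g h i j) x
    + ∑ l, christoffel g h j l x * christoffel g l i k x
    - ∑ l, christoffel g h k l x * christoffel g l i j x

/-- The (0,4) Riemann–Christoffel curvature tensor `R_{hijk} = g_{hl} R^l_{ijk}`. -/
def riemann (g : Ten2 n) : Ten4 n := fun x h i j k => ∑ l, g x h l * curvUp g l i j k x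

/-- The Ricci tensor `S_{ij} = R^k_{ikj}`. -/
def ricci (g : Ten2 n) : Ten2 n := fun x i j => ∑ k, curvUp g k i k j x

/-- The scalar curvature `κ = g^{ij} S_{ij}`. -/
def scalarCurv (g : Ten2 n) (x : Pt n) : ℝ := ∑ i, ∑ j, ginv g x i j * ricci g x i j

/-- Components `S_{ij,k}` of the covariant derivative of the Ricci tensor. -/
def ricciCov (g : Ten2 n) (x : Pt n) (i j k : Fin n) : ℝ :=
  pderiv k (fun y => ricci g y i j) x
    - ∑ l, christoffel g l k i x * ricci g x l j
    - ∑ l, christoffel g l k j x * ricci g x i l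

/-- The Kulkarni–Nomizu product of two symmetric (0,2)-tensors. -/
def kn (A B : Ten2 n) : Ten4 n := fun x X1 X2 X3 X4 =>
  A x X1 X4 * B x X2 X3 + A x X2 X3 * B x X1 X4 - A x X1 X3 * B x X2 X4 - A x X2 X4 * B x X1 X3

/-- The Gaussian curvature tensor `G = (1/2) g ∧ g`. -/
def Gten (g : Ten2 n) : Ten4 n := fun x i j k l => (1/2) * kn g g x i j k l

/-- The Weyl conformal curvature tensor
`C = R − (1/(n−2)) g∧S + (κ/((n−2)(n−1))) G`. -/
def weyl (g : Ten2 n) : Ten4 n := fun x h i j k =>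
  riemann g x h i j k - (1/((n:ℝ)-2)) * kn g (ricci g) x h i j k
    + (scalarCurv g x / (((n:ℝ)-2)*((n:ℝ)-1))) * Gten g x h i j k

/-- The conharmonic curvature tensor `conh(R) = R − (1/(n−2)) g∧S`. -/
def conh (g : Ten2 n) : Ten4 n := fun x h i j k =>
  riemann g x h i j k - (1/((n:ℝ)-2)) * kn g (ricci g) x h i j k

/-- The concircular curvature tensor `K = R − (κ/(n(n−1))) G`. -/
def concirc (g : Ten2 n) : Ten4 n := fun x h i j k =>
  riemann g x h i j k - (scalarCurv g x / ((n:ℝ)*((n:ℝ)-1))) * Gten g x h i j k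

/-- The (0,6)-tensor `T·T'` for (0,4)-tensors `T, T'`: the curvature-type tensor `T`
acts as a derivation (through the endomorphisms `𝒯(X,Y)` with
`g(𝒯(X,Y)Z,W) = T(X,Y,Z,W)`) on the (0,4)-tensor `T'`. -/
def dot44 (g : Ten2 n) (T T' : Ten4 n) :
    Pt n → Fin n → Fin n → Fin n → Fin n → Fin n → Fin n → ℝ :=
  fun x h i j k l m =>
  -(∑ r, ∑ s, ginv g x r s *
    (T x l m h s * T' x r i j k + T x l m i s * T' x h r j k
      + T x l m j s * T' x h i r k + T x l m k s * T' x h i j r))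

/-- The (0,4)-tensor `T·A` for a (0,4)-tensor `T` acting on a (0,2)-tensor `A`. -/
def dot42 (g : Ten2 n) (T : Ten4 n) (A : Ten2 n) :
    Pt n → Fin n → Fin n → Fin n → Fin n → ℝ :=
  fun x i j l m =>
  -(∑ r, ∑ s, ginv g x r s * (T x l m i s * A x r j + T x l m j s * A x i r))

/-- The Tachibana tensor `Q(A,T')` of a symmetric (0,2)-tensor `A`
and a (0,4)-tensor `T'`, built from the endomorphisms `X ∧_A Y`. -/
def tach4 (A : Ten2 n) (T' : Ten4 n) :
    Pt n → Fin n → Fin n → Fin n → Fin n → Fin n → Fin n → ℝ :=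
  fun x h i j k l m =>
  -((A x m h * T' x l i j k - A x l h * T' x m i j k)
    + (A x m i * T' x h l j k - A x l i * T' x h m j k)
    + (A x m j * T' x h i l k - A x l j * T' x h i m k)
    + (A x m k * T' x h i j l - A x l k * T' x h i j m))

/-- The Tachibana tensor `Q(A,B)` of a symmetric (0,2)-tensor `A`
and a (0,2)-tensor `B`. -/
def tach2 (A B : Ten2 n) : Pt n → Fin n → Fin n → Fin n → Fin n → ℝ :=
  fun x i j l m =>
  -((A x m i * B x l j - A x l i * B x m j) + (A x m j * B x i l - A x l j * B x i m))

/-- The Gödel metric on `ℝ⁴`: `g₁₁ = −a²`, `g₂₂ = (a²/2)e^{2x¹}`, `g₃₃ = −a²`,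
`g₄₄ = a²`, `g₂₄ = g₄₂ = a²e^{x¹}`, all other components zero. -/
def godel (a : ℝ) : Ten2 4 := fun x i j =>
  ![![-a^2, 0, 0, 0],
    ![0, a^2/2 * Real.exp (2 * x 0), 0, a^2 * Real.exp (x 0)],
    ![0, 0, -a^2, 0],
    ![0, a^2 * Real.exp (x 0), 0, a^2]] i j


/-! The Gödel metric depends on `x¹` alone, so its Christoffel symbols and curvature components
are explicit functions of `e^{x¹}`. Four instances of the cyclic condition already force `θ = 0`
(indices below are Lean's, `0 ↔ x¹`): `(h,i,j,k,m) = (1,3,1,3,0)` and `(0,3,0,3,2)` each keep a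
single nonzero term and give `θ₀ = θ₂ = 0`, while `(0,3,0,3,1)` and `(0,1,0,1,3)` form a linear
system in `(θ₁, θ₃)` of determinant `a⁴e^{2x¹}/8 ≠ 0`. -/

theorem pderiv_const (i : Fin n) (c : ℝ) (x : Pt n) : pderiv i (fun _ : Pt n => c) x = 0 := by
  simp [pderiv]

theorem pderiv_comp_apply {f : ℝ → ℝ} {f' : ℝ} {c : Fin n} {x : Pt n}
    (hf : HasDerivAt f f' (x c)) (i : Fin n) :
    pderiv i (fun y => f (y c)) x = if i = c then f' else 0 := by
  have hfy : HasFDerivAt (fun y : Pt n => f (y c))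
      (f' • ContinuousLinearMap.proj (R := ℝ) (φ := fun _ : Fin n => ℝ) c) x :=
    hf.comp_hasFDerivAt x (hasFDerivAt_apply c x)
  rw [pderiv, hfy.fderiv]
  by_cases hi : i = c <;> simp [hi]

theorem pderiv_mul_exp (i c : Fin n) (r : ℝ) (x : Pt n) :
    pderiv i (fun y => r * Real.exp (y c)) x = if i = c then r * Real.exp (x c) else 0 :=
  pderiv_comp_apply ((Real.hasDerivAt_exp _).const_mul r) i

theorem pderiv_mul_exp_two_mul (i c : Fin n) (r : ℝ) (x : Pt n) :
    pderiv i (fun y => r * Real.exp (2 * y c)) x =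
      if i = c then 2 * r * Real.exp (2 * x c) else 0 :=
  pderiv_comp_apply
    ((((hasDerivAt_id' (x c)).const_mul 2).exp.const_mul r).congr_deriv (by ring)) i

theorem pderiv_neg_exp_neg (i c : Fin n) (x : Pt n) :
    pderiv i (fun y => -Real.exp (-y c)) x = if i = c then Real.exp (-x c) else 0 :=
  pderiv_comp_apply ((hasDerivAt_neg (x c)).exp.neg.congr_deriv (by ring)) i

theorem exp_two_mul_eq_sq (t : ℝ) : Real.exp (2 * t) = Real.exp t ^ 2 := by
  rw [← Real.exp_nat_mul]; norm_num

theorem ginv_godel {a : ℝ} (ha : a ≠ 0) (x : Pt 4) (i j : Fin 4) :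
    ginv (godel a) x i j =
      ![![-(a^2)⁻¹, 0, 0, 0],
        ![0, -2 * (a^2 * Real.exp (x 0)^2)⁻¹, 0, 2 * (a^2 * Real.exp (x 0))⁻¹],
        ![0, 0, -(a^2)⁻¹, 0],
        ![0, 2 * (a^2 * Real.exp (x 0))⁻¹, 0, -(a^2)⁻¹]] i j := by
  have hE := Real.exp_ne_zero (x 0)
  have hinv : Matrix.of (godel a x) *
      Matrix.of ![![-(a^2)⁻¹, 0, 0, 0],
        ![0, -2 * (a^2 * Real.exp (x 0)^2)⁻¹, 0, 2 * (a^2 * Real.exp (x 0))⁻¹],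
        ![0, 0, -(a^2)⁻¹, 0],
        ![0, 2 * (a^2 * Real.exp (x 0))⁻¹, 0, -(a^2)⁻¹]] = 1 := by
    ext i j
    fin_cases i <;> fin_cases j <;>
      simp [Matrix.mul_apply, Fin.sum_univ_four, godel, exp_two_mul_eq_sq] <;>
      field_simp <;> ring
  rw [ginv, Matrix.inv_eq_right_inv hinv, Matrix.of_apply]

-- Entries are written in the shapes the `pderiv_*` lemmas above differentiate.
def godelChristoffel (x : Pt 4) : Fin 4 → Fin 4 → Fin 4 → ℝ :=
  ![![![0, 0, 0, 0],
      ![0, 1/2 * Real.exp (2 * x 0), 0, 1/2 * Real.exp (x 0)],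
      ![0, 0, 0, 0],
      ![0, 1/2 * Real.exp (x 0), 0, 0]],
    ![![0, 0, 0, -Real.exp (-x 0)],
      ![0, 0, 0, 0],
      ![0, 0, 0, 0],
      ![-Real.exp (-x 0), 0, 0, 0]],
    ![![0, 0, 0, 0],
      ![0, 0, 0, 0],
      ![0, 0, 0, 0],
      ![0, 0, 0, 0]],
    ![![0, 1/2 * Real.exp (x 0), 0, 1],
      ![1/2 * Real.exp (x 0), 0, 0, 0],
      ![0, 0, 0, 0],
      ![1, 0, 0, 0]]]

theorem christoffel_godel {a : ℝ} (ha : a ≠ 0) (h i j : Fin 4) :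
    christoffel (godel a) h i j = fun x => godelChristoffel x h i j := by
  funext x
  have hE := Real.exp_ne_zero (x 0)
  fin_cases h <;> fin_cases i <;> fin_cases j <;>
    simp only [christoffel, Fin.sum_univ_four, ginv_godel ha, godel, godelChristoffel,
      Fin.reduceFinMk, Matrix.cons_val, pderiv_const, pderiv_mul_exp, pderiv_mul_exp_two_mul] <;>
    simp [exp_two_mul_eq_sq, Real.exp_neg] <;>
    field_simp <;> ring

theorem riemann_godel_components {a : ℝ} (ha : a ≠ 0) (x : Pt 4) :
    riemann (godel a) x 1 3 1 3 = -(a^2 * Real.exp (x 0)^2) / 4 ∧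
    riemann (godel a) x 1 3 3 0 = 0 ∧
    riemann (godel a) x 1 3 0 1 = 0 ∧
    riemann (godel a) x 0 3 0 3 = -a^2 / 2 ∧
    riemann (godel a) x 0 3 3 2 = 0 ∧
    riemann (godel a) x 0 3 2 0 = 0 ∧
    riemann (godel a) x 0 3 3 1 = 0 ∧
    riemann (godel a) x 0 3 1 0 = a^2 * Real.exp (x 0) / 2 ∧
    riemann (godel a) x 0 1 0 1 = -(3 * a^2 * Real.exp (x 0)^2) / 4 ∧
    riemann (godel a) x 0 1 1 3 = 0 ∧
    riemann (godel a) x 0 1 3 0 = a^2 * Real.exp (x 0) / 2 := by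
  have hE := Real.exp_ne_zero (x 0)
  refine ⟨?_, ?_, ?_, ?_, ?_, ?_, ?_, ?_, ?_, ?_, ?_⟩ <;>
    simp only [riemann, curvUp, Fin.sum_univ_four, christoffel_godel ha, godel, godelChristoffel,
      Matrix.cons_val, pderiv_const, pderiv_mul_exp, pderiv_mul_exp_two_mul,
      pderiv_neg_exp_neg] <;>
    simp [exp_two_mul_eq_sq, Real.exp_neg] <;>
    field_simp <;> ring

/-- At every point of the Gödel spacetime there is no nonzero
covector `θ` with `θ_m R_{hijk} + θ_j R_{hikm} + θ_k R_{himj} = 0` for all indices;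
i.e. the Deszcz–Grycak sufficient condition for `R·R = Q(S,R)` fails. -/
theorem godel_no_cyclic_covector (a : ℝ) (ha : 0 < a) :
    ∀ x : Pt 4, ¬ ∃ θ : Fin 4 → ℝ, θ ≠ 0 ∧
      ∀ h i j k m : Fin 4,
        θ m * riemann (godel a) x h i j k + θ j * riemann (godel a) x h i k m
          + θ k * riemann (godel a) x h i m j = 0 := by
  rintro x ⟨θ, hθ, hcyc⟩
  obtain ⟨r1313, r1330, r1301, r0303, r0332, r0320, r0331, r0310, r0101, r0113, r0130⟩ :=
    riemann_godel_components ha.ne' x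
  have e₁ := hcyc 1 3 1 3 0
  have e₂ := hcyc 0 3 0 3 2
  have e₃ := hcyc 0 3 0 3 1
  have e₄ := hcyc 0 1 0 1 3
  rw [r1313, r1330, r1301] at e₁
  rw [r0303, r0332, r0320] at e₂
  rw [r0303, r0331, r0310] at e₃
  rw [r0101, r0113, r0130] at e₄
  have ha2 : a^2 ≠ 0 := by positivity
  have hE := Real.exp_ne_zero (x 0)
  have hθ₀ : θ 0 = 0 := by simpa [ha2, hE] using e₁
  have hθ₂ : θ 2 = 0 := by simpa [ha2] using e₂
  have hθ₃ : θ 3 = 0 := by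
    have : a^2 * Real.exp (x 0)^2 * θ 3 = 0 := by
      linear_combination -4 * e₄ - 4 * Real.exp (x 0) * e₃
    simpa [ha2, hE] using this
  have hθ₁ : θ 1 = 0 := by simpa [hθ₃, ha2] using e₃
  exact hθ (funext fun i => by fin_cases i <;> assumption)
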